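/- Let β : [0, ε) → ℝ be smooth with β(0) < 0, and let v : [0, ε) → ℝ be a smooth function satisfying x·v'(x) = β(x)·v(x). Then v ≡ 0. More precisely, every solution on (0, ε) is of the form v(x) = c·x^{β(0)}·h(x) with h smooth and nonvanishing, and smoothness of v up to x = 0 forces c = 0. -/

import Mathlib

open Filter Set Metric Topology ENNReal NNReal

private lemma const_of_hasDerivAt_zero {f : ℝ → ℝ} {s : Set ℝ} (hs : Convex ℝ s)
    (hso : IsOpen s) (hf : ∀ y ∈ s, HasDerivAt f 0 y) {x y : ℝ} (hx : x ∈ s) (hy : y ∈ s) :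
    f x = f y := by
  apply hs.is_const_of_fderivWithin_eq_zero
    (fun z hz => ((hf z hz).differentiableAt).differentiableWithinAt) ?_ hx hy
  intro z hz
  rw [fderivWithin_of_isOpen hso hz]
  have h2 : HasFDerivAt f (ContinuousLinearMap.smulRight (1 : ℝ →L[ℝ] ℝ) (0 : ℝ)) z :=
    hasDerivAt_iff_hasFDerivAt.1 (hf z hz)
  rw [h2.fderiv]
  ext
  simp

private lemma aux_cont {ε : ℝ} {φ : ℝ → ℝ} (hφ : ContinuousOn φ (Set.Ico 0 ε)) (m : ℕ)
    {x : ℝ} (hx0 : 0 ≤ x) (hxε : x < ε) :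
    ContinuousOn (fun s : ℝ => s ^ m * φ (s * x)) (Set.uIcc 0 1) := by
  rw [Set.uIcc_of_le zero_le_one]
  exact (continuous_pow m).continuousOn.mul (hφ.comp (continuous_mul_right x).continuousOn
    fun s hs => ⟨mul_nonneg hs.1 hx0, lt_of_le_of_lt (mul_le_of_le_one_left hx0 hs.2) hxε⟩)

private lemma hderiv_int {ε : ℝ} {g : ℝ → ℝ} (hg : ContDiffOn ℝ (⊤ : ℕ∞) g (Set.Ico 0 ε))
    {y : ℝ} (hy : y ∈ Set.Ioo 0 ε) : HasDerivAt g (derivWithin g (Set.Ico 0 ε) y) y :=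
  ((hg.differentiableOn (by simp)) y (Set.Ioo_subset_Ico_self hy)).hasDerivWithinAt.hasDerivAt
    (Ico_mem_nhds_iff.2 hy)

private lemma J_cont {ε : ℝ} (k : ℕ) {g : ℝ → ℝ} (hg : ContinuousOn g (Set.Ico 0 ε)) :
    ContinuousOn (fun t => ∫ s in (0:ℝ)..1, s ^ k * g (s * t)) (Set.Ico 0 ε) := by
  intro t0 ht0
  obtain ⟨b, htb, hbε⟩ := exists_between ht0.2
  have hb0 : 0 ≤ b := ht0.1.trans htb.le
  set gt : ℝ → ℝ := fun u => g (max 0 (min u b)) with hgt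
  have hgtc : Continuous gt := hg.comp_continuous
    (continuous_const.max (continuous_id.min continuous_const))
    (fun u => ⟨le_max_left _ _, lt_of_le_of_lt (max_le hb0 (min_le_right _ _)) hbε⟩)
  have hF : Continuous (fun t => ∫ s in (0:ℝ)..1, s ^ k * gt (s * t)) :=
    intervalIntegral.continuous_parametric_intervalIntegral_of_continuous'
      (μ := MeasureTheory.volume) (f := fun t s => s ^ k * gt (s * t))
      (show Continuous (fun p : ℝ × ℝ => p.2 ^ k * gt (p.2 * p.1)) from
        (continuous_snd.pow k).mul (hgtc.comp (continuous_snd.mul continuous_fst))) 0 1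
  have heq : ∀ t ∈ Set.Icc 0 b,
      (∫ s in (0:ℝ)..1, s ^ k * g (s * t)) = ∫ s in (0:ℝ)..1, s ^ k * gt (s * t) := by
    intro t ht
    apply intervalIntegral.integral_congr
    intro s hs
    rw [Set.uIcc_of_le zero_le_one] at hs
    have h1 : 0 ≤ s * t := mul_nonneg hs.1 ht.1
    have h2 : s * t ≤ b := (mul_le_of_le_one_left ht.1 hs.2).trans ht.2
    simp only [hgt, min_eq_left h2, max_eq_right h1]
  apply hF.continuousAt.continuousWithinAt.congr_of_eventuallyEq
  · filter_upwards [self_mem_nhdsWithin, mem_nhdsWithin_of_mem_nhds (Iio_mem_nhds htb)]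
      with t ht htb'
    exact heq t ⟨ht.1, le_of_lt htb'⟩
  · exact heq t0 ⟨ht0.1, htb.le⟩

private lemma J_hasDerivAt {ε : ℝ} {g : ℝ → ℝ} (hg : ContDiffOn ℝ (⊤ : ℕ∞) g (Set.Ico 0 ε))
    (k : ℕ) {t : ℝ} (ht : t ∈ Set.Ioo 0 ε) :
    HasDerivAt (fun x => ∫ s in (0:ℝ)..1, s ^ k * g (s * x))
      (∫ s in (0:ℝ)..1, s ^ (k + 1) * derivWithin g (Set.Ico 0 ε) (s * t)) t := by
  obtain ⟨b, htb, hbε⟩ := exists_between ht.2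
  have hgc : ContinuousOn g (Set.Ico 0 ε) := hg.continuousOn
  have hDc : ContinuousOn (derivWithin g (Set.Ico 0 ε)) (Set.Ico 0 ε) :=
    ((contDiffOn_infty_iff_derivWithin (uniqueDiffOn_Ico 0 ε)).1 hg).2.continuousOn
  obtain ⟨C, hC⟩ := (isCompact_Icc (a := (0 : ℝ)) (b := b)).exists_bound_of_continuousOn
    (hDc.mono (Set.Icc_subset_Ico_right hbε))
  have hS : Set.Ioo 0 b ∈ 𝓝 t := Ioo_mem_nhds ht.1 htb
  have key := intervalIntegral.hasDerivAt_integral_of_dominated_loc_of_deriv_le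
    (μ := MeasureTheory.volume) (a := 0) (b := 1)
    (F := fun x s => s ^ k * g (s * x))
    (F' := fun x s => s ^ (k + 1) * derivWithin g (Set.Ico 0 ε) (s * x))
    (bound := fun _ => C) hS ?_ ?_ ?_ ?_ intervalIntegrable_const ?_
  · exact key.2
  · filter_upwards [hS] with x hx
    exact ((aux_cont hgc k hx.1.le (hx.2.trans hbε)).mono
      Set.uIoc_subset_uIcc).aestronglyMeasurable measurableSet_uIoc
  · exact (aux_cont hgc k ht.1.le ht.2).intervalIntegrable
  · exact ((aux_cont hDc (k + 1) ht.1.le ht.2).mono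
      Set.uIoc_subset_uIcc).aestronglyMeasurable measurableSet_uIoc
  · refine Filter.Eventually.of_forall (fun s hs x hx => ?_)
    rw [Set.uIoc_of_le zero_le_one] at hs
    have hsx : s * x ∈ Set.Icc 0 b :=
      ⟨mul_nonneg hs.1.le hx.1.le, (mul_le_of_le_one_left hx.1.le hs.2).trans hx.2.le⟩
    have h1 : s ^ (k + 1) ≤ 1 := pow_le_one₀ hs.1.le hs.2
    rw [norm_mul, norm_pow, Real.norm_eq_abs, abs_of_pos hs.1]
    exact (mul_le_of_le_one_left (norm_nonneg _) h1).trans (hC (s * x) hsx)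
  · refine Filter.Eventually.of_forall (fun s hs x hx => ?_)
    rw [Set.uIoc_of_le zero_le_one] at hs
    have hsx : s * x ∈ Set.Ioo 0 ε :=
      ⟨mul_pos hs.1 hx.1,
        lt_of_le_of_lt ((mul_le_of_le_one_left hx.1.le hs.2).trans hx.2.le) hbε⟩
    have hgd := hderiv_int hg hsx
    have hl : HasDerivAt (fun x => s * x) s x := by
      simpa using (hasDerivAt_id x).const_mul s
    have h2 := (hgd.comp x hl).const_mul (s ^ k)
    exact h2.congr_deriv (show s ^ k * (derivWithin g (Set.Ico 0 ε) (s * x) * s) = _ by ring)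

private lemma hasDerivWithinAt_Ico_of_interior {ε : ℝ} (hε : 0 < ε) {f f' : ℝ → ℝ}
    (hfc : ContinuousOn f (Set.Ico 0 ε)) (hf'c : ContinuousOn f' (Set.Ico 0 ε))
    (hd : ∀ t ∈ Set.Ioo 0 ε, HasDerivAt f (f' t) t) :
    ∀ t ∈ Set.Ico 0 ε, HasDerivWithinAt f (f' t) (Set.Ico 0 ε) t := by
  intro t ht
  rcases eq_or_lt_of_le ht.1 with h0 | h0
  · subst h0
    have h1 : HasDerivWithinAt f (f' 0) (Set.Ici 0) 0 := by
      apply hasDerivWithinAt_Ici_of_tendsto_deriv (s := Set.Ioo 0 ε)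
      · exact fun y hy => (hd y hy).differentiableAt.differentiableWithinAt
      · exact (hfc 0 ht).mono Set.Ioo_subset_Ico_self
      · exact Ioo_mem_nhdsGT hε
      · have h2 : Tendsto f' (𝓝[>] 0) (𝓝 (f' 0)) := by
          rw [← nhdsWithin_Ioo_eq_nhdsGT hε]
          exact (hf'c 0 ht).mono Set.Ioo_subset_Ico_self
        apply h2.congr'
        filter_upwards [Ioo_mem_nhdsGT hε] with y hy
        exact (hd y hy).deriv.symm
    exact h1.mono Set.Ico_subset_Ici_self
  · exact (hd t ⟨h0, ht.2⟩).hasDerivWithinAt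

private lemma contDiffOn_succ_of_hasDerivWithinAt {ε : ℝ} {f f' : ℝ → ℝ} {n : ℕ}
    (hd : ∀ t ∈ Set.Ico 0 ε, HasDerivWithinAt f (f' t) (Set.Ico 0 ε) t)
    (hf' : ContDiffOn ℝ n f' (Set.Ico 0 ε)) : ContDiffOn ℝ ((n + 1 : ℕ)) f (Set.Ico 0 ε) := by
  have hc : ((n + 1 : ℕ) : WithTop ℕ∞) = (n : WithTop ℕ∞) + 1 := by norm_cast
  rw [hc, contDiffOn_succ_iff_derivWithin (uniqueDiffOn_Ico 0 ε)]
  exact ⟨fun t ht => (hd t ht).differentiableWithinAt, fun h => absurd h (by simp),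
    hf'.congr fun t ht => (hd t ht).derivWithin (uniqueDiffOn_Ico 0 ε t ht)⟩

private lemma J_smooth {ε : ℝ} (hε : 0 < ε) : ∀ (n k : ℕ) {g : ℝ → ℝ},
    ContDiffOn ℝ (⊤ : ℕ∞) g (Set.Ico 0 ε) →
    ContDiffOn ℝ n (fun t => ∫ s in (0:ℝ)..1, s ^ k * g (s * t)) (Set.Ico 0 ε) := by
  intro n
  induction n with
  | zero =>
    intro k g hg
    rw [Nat.cast_zero, contDiffOn_zero]
    exact J_cont k hg.continuousOn
  | succ n ih =>
    intro k g hg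
    have hD := ((contDiffOn_infty_iff_derivWithin (uniqueDiffOn_Ico 0 ε)).1 hg).2
    apply contDiffOn_succ_of_hasDerivWithinAt _ (ih (k + 1) hD)
    exact hasDerivWithinAt_Ico_of_interior hε (J_cont k hg.continuousOn)
      (J_cont (k + 1) hD.continuousOn) (fun t ht => J_hasDerivAt hg k ht)

private lemma W_eq_slope {ε : ℝ} {β : ℝ → ℝ} (hβ : ContDiffOn ℝ (⊤ : ℕ∞) β (Set.Ico 0 ε))
    {y : ℝ} (hy : y ∈ Set.Ioo 0 ε) :
    ∫ s in (0:ℝ)..1, s ^ 0 * derivWithin β (Set.Ico 0 ε) (s * y) = (β y - β 0) / y := by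
  have hD := ((contDiffOn_infty_iff_derivWithin (uniqueDiffOn_Ico 0 ε)).1 hβ).2
  have hint := (aux_cont hD.continuousOn 0 hy.1.le hy.2).intervalIntegrable
    (μ := MeasureTheory.volume)
  rw [intervalIntegral.integral_eq_sub_of_hasDerivAt_of_le zero_le_one
    (f := fun s => β (s * y) / y) ?_ ?_ hint]
  · simp only [one_mul, zero_mul]
    ring
  · have h := aux_cont hβ.continuousOn 0 hy.1.le hy.2
    rw [Set.uIcc_of_le zero_le_one] at h
    simpa using h.div_const y
  · intro s hs
    have hsy : s * y ∈ Set.Ioo 0 ε :=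
      ⟨mul_pos hs.1 hy.1, lt_of_le_of_lt (mul_le_of_le_one_left hy.1.le hs.2.le) hy.2⟩
    have h1 := hderiv_int hβ hsy
    have hl : HasDerivAt (fun s => s * y) y s := by
      simpa using (hasDerivAt_id s).mul_const y
    have h2 := (h1.comp s hl).div_const y
    exact h2.congr_deriv (show derivWithin β (Set.Ico 0 ε) (s * y) * y / y = _ by
      field_simp [hy.1.ne'])

private lemma primitive_hasDerivWithinAt {ε : ℝ} (hε : 0 < ε) {W : ℝ → ℝ}
    (hW : ContinuousOn W (Set.Ico 0 ε)) :
    ∀ y ∈ Set.Ico 0 ε,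
      HasDerivWithinAt (fun x => ∫ t in (0:ℝ)..x, W t) (W y) (Set.Ico 0 ε) y := by
  apply hasDerivWithinAt_Ico_of_interior hε _ hW
  · intro y hy
    apply intervalIntegral.integral_hasDerivAt_right
    · apply (hW.mono _).intervalIntegrable
      rw [Set.uIcc_of_le hy.1.le]
      exact Set.Icc_subset_Ico_right hy.2
    · exact (hW.mono Set.Ioo_subset_Ico_self).stronglyMeasurableAtFilter isOpen_Ioo y hy
    · exact hW.continuousAt (Ico_mem_nhds_iff.2 hy)
  · intro y hy
    obtain ⟨b, hyb, hbε⟩ := exists_between hy.2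
    have hb0 : 0 ≤ b := hy.1.trans hyb.le
    have h1 : ContinuousOn (fun x => ∫ t in (0:ℝ)..x, W t) (Set.uIcc 0 b) := by
      apply intervalIntegral.continuousOn_primitive_interval
      rw [Set.uIcc_of_le hb0]
      exact (hW.mono (Set.Icc_subset_Ico_right hbε)).integrableOn_Icc
    rw [Set.uIcc_of_le hb0] at h1
    apply (h1 y ⟨hy.1, hyb.le⟩).mono_of_mem_nhdsWithin
    exact mem_nhdsWithin.2 ⟨Set.Iio b, isOpen_Iio, hyb, fun z hz => ⟨hz.2.1, hz.1.le⟩⟩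

private lemma part2_aux {ε : ℝ} (hε : 0 < ε) {β : ℝ → ℝ}
    (hβ : ContDiffOn ℝ (⊤ : ℕ∞) β (Set.Ico 0 ε)) :
    ∀ v : ℝ → ℝ,
      (∀ x ∈ Set.Ioo (0 : ℝ) ε, DifferentiableAt ℝ v x ∧ x * deriv v x = β x * v x) →
      ∃ c : ℝ, ∃ h : ℝ → ℝ, ContDiffOn ℝ (⊤ : ℕ∞) h (Set.Ico 0 ε) ∧
        (∀ x ∈ Set.Ico (0 : ℝ) ε, h x ≠ 0) ∧
        ∀ x ∈ Set.Ioo (0 : ℝ) ε, v x = c * x ^ (β 0) * h x := by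
  intro v hv
  have hβc : ContinuousOn β (Set.Ico 0 ε) := hβ.continuousOn
  set w : ℝ → ℝ := fun t => (β t - β 0) / t with hwdef
  have hw_cont : ContinuousOn w (Set.Ioo 0 ε) := by
    apply ContinuousOn.div
      ((hβc.mono Set.Ioo_subset_Ico_self).sub continuousOn_const) continuousOn_id
    exact fun x hx => ne_of_gt hx.1
  have haI : (ε / 2) ∈ Set.Ioo (0 : ℝ) ε := ⟨half_pos hε, half_lt_self hε⟩
  set Φ : ℝ → ℝ := fun x => ∫ t in (ε / 2)..x, w t with hΦdef
  have husub : ∀ {x : ℝ}, x ∈ Set.Ioo (0 : ℝ) ε → Set.uIcc (ε / 2) x ⊆ Set.Ioo 0 ε := by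
    intro x hx y hy
    rw [Set.mem_uIcc] at hy
    constructor
    · rcases hy with ⟨h1, _⟩ | ⟨h1, _⟩
      · exact lt_of_lt_of_le haI.1 h1
      · exact lt_of_lt_of_le hx.1 h1
    · rcases hy with ⟨_, h2⟩ | ⟨_, h2⟩
      · exact lt_of_le_of_lt h2 hx.2
      · exact lt_of_le_of_lt h2 haI.2
  have hΦderiv : ∀ x ∈ Set.Ioo (0 : ℝ) ε, HasDerivAt Φ (w x) x := by
    intro x hx
    apply intervalIntegral.integral_hasDerivAt_right
    · exact (hw_cont.mono (husub hx)).intervalIntegrable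
    · exact hw_cont.stronglyMeasurableAtFilter isOpen_Ioo x hx
    · exact hw_cont.continuousAt (isOpen_Ioo.mem_nhds hx)
  -- smooth extension of w at 0
  have hβD : ContDiffOn ℝ (⊤ : ℕ∞) (derivWithin β (Set.Ico 0 ε)) (Set.Ico 0 ε) :=
    ((contDiffOn_infty_iff_derivWithin (uniqueDiffOn_Ico 0 ε)).1 hβ).2
  set W : ℝ → ℝ := fun t => ∫ s in (0:ℝ)..1, s ^ 0 * derivWithin β (Set.Ico 0 ε) (s * t)
    with hWdef
  have hWC : ContDiffOn ℝ (⊤ : ℕ∞) W (Set.Ico 0 ε) :=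
    contDiffOn_infty.2 (fun n => J_smooth hε n 0 hβD)
  have hWw : ∀ y ∈ Set.Ioo (0 : ℝ) ε, W y = w y := fun y hy => W_eq_slope hβ hy
  set G : ℝ → ℝ := fun x => ∫ t in (0 : ℝ)..x, W t with hGdef
  have hGderiv : ∀ y ∈ Set.Ico (0 : ℝ) ε, HasDerivWithinAt G (W y) (Set.Ico 0 ε) y :=
    primitive_hasDerivWithinAt hε hWC.continuousOn
  have hGC : ContDiffOn ℝ (⊤ : ℕ∞) G (Set.Ico 0 ε) := by
    rw [contDiffOn_infty_iff_derivWithin (uniqueDiffOn_Ico 0 ε)]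
    exact ⟨fun y hy => (hGderiv y hy).differentiableWithinAt,
      hWC.congr fun y hy => (hGderiv y hy).derivWithin (uniqueDiffOn_Ico 0 ε y hy)⟩
  have hconstΦG : ∀ y ∈ Set.Ioo (0 : ℝ) ε, Φ y - G y = Φ (ε / 2) - G (ε / 2) := by
    intro y hy
    refine const_of_hasDerivAt_zero (f := fun z => Φ z - G z) (convex_Ioo _ _) isOpen_Ioo
      ?_ hy haI
    intro z hz
    have h1 := (hΦderiv z hz).sub
      ((hGderiv z (Set.Ioo_subset_Ico_self hz)).hasDerivAt (Ico_mem_nhds_iff.2 hz))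
    rw [hWw z hz, sub_self] at h1
    exact h1
  set K : ℝ := Φ (ε / 2) - G (ε / 2) with hKdef
  set hh : ℝ → ℝ := fun x => Real.exp (G x + K) with hhdef
  have hhΦ : ∀ x ∈ Set.Ioo (0 : ℝ) ε, hh x = Real.exp (Φ x) := by
    intro x hx
    have h1 : Φ x - G x = K := hconstΦG x hx
    simp only [hhdef]
    rw [show G x + K = Φ x by linarith]
  have hhC : ContDiffOn ℝ (⊤ : ℕ∞) hh (Set.Ico 0 ε) := (hGC.add contDiffOn_const).exp
  have hhne : ∀ x ∈ Set.Ico (0 : ℝ) ε, hh x ≠ 0 := by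
    intro x _
    exact Real.exp_ne_zero _
  -- the ODE computation
  set u : ℝ → ℝ := fun x => v x * Real.exp (-Φ x) * x ^ (-β 0) with hudef
  have huderiv : ∀ x ∈ Set.Ioo (0 : ℝ) ε, HasDerivAt u 0 x := by
    intro x hx
    obtain ⟨hvd, hode⟩ := hv x hx
    have hx0 : x ≠ 0 := ne_of_gt hx.1
    have h1 : HasDerivAt v (deriv v x) x := hvd.hasDerivAt
    have h2 : HasDerivAt (fun y => Real.exp (-Φ y)) (Real.exp (-Φ x) * -w x) x :=
      ((hΦderiv x hx).neg).exp
    have h3 : HasDerivAt (fun y : ℝ => y ^ (-β 0)) (-β 0 * x ^ (-β 0 - 1)) x :=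
      Real.hasDerivAt_rpow_const (Or.inl hx0)
    have h4 : HasDerivAt u _ x := (h1.mul h2).mul h3
    have h5 : x ^ (-β 0 - 1) = x ^ (-β 0) / x := by
      rw [Real.rpow_sub hx.1, Real.rpow_one]
    have hD : deriv v x = β x * v x / x := by
      field_simp
      linear_combination hode
    convert h4 using 1
    rw [hD, h5]
    simp only [hwdef]
    field_simp
    simp only [Pi.mul_apply]
    ring
  have hconstu : ∀ x ∈ Set.Ioo (0 : ℝ) ε, u x = u (ε / 2) := fun x hx =>
    const_of_hasDerivAt_zero (convex_Ioo _ _) isOpen_Ioo huderiv hx haI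
  refine ⟨u (ε / 2), hh, hhC, hhne, ?_⟩
  intro x hx
  have hx0 : (0 : ℝ) < x := hx.1
  have h1 : v x * Real.exp (-Φ x) * x ^ (-β 0) = u (ε / 2) := hconstu x hx
  rw [Real.rpow_neg hx0.le, Real.exp_neg] at h1
  rw [hhΦ x hx, ← h1]
  have hrne : x ^ (β 0) ≠ 0 := ne_of_gt (Real.rpow_pos_of_pos hx0 _)
  have hexpne : Real.exp (Φ x) ≠ 0 := Real.exp_ne_zero _
  field_simp

/-- Scalar singular ODE lemma: if `β` is smooth with `β(0) < 0`, then every smooth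
`v : [0, ε) → ℝ` with `x·v'(x) = β(x)·v(x)` vanishes identically; more precisely,
every solution on `(0, ε)` has the form `v(x) = c·x^{β(0)}·h(x)` with `h` smooth and
nonvanishing, and smoothness of `v` up to `x = 0` forces `c = 0`. -/
theorem scalar_singular_ode_vanishing (ε : ℝ) (hε : 0 < ε) (β : ℝ → ℝ)
    (hβ : ContDiffOn ℝ (⊤ : ℕ∞) β (Set.Ico 0 ε)) (hβ0 : β 0 < 0) :
    (∀ v : ℝ → ℝ, ContDiffOn ℝ (⊤ : ℕ∞) v (Set.Ico 0 ε) →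
      (∀ x ∈ Set.Ico (0 : ℝ) ε, x * derivWithin v (Set.Ici 0) x = β x * v x) →
      ∀ x ∈ Set.Ico (0 : ℝ) ε, v x = 0) ∧
    (∀ v : ℝ → ℝ,
      (∀ x ∈ Set.Ioo (0 : ℝ) ε, DifferentiableAt ℝ v x ∧ x * deriv v x = β x * v x) →
      ∃ c : ℝ, ∃ h : ℝ → ℝ, ContDiffOn ℝ (⊤ : ℕ∞) h (Set.Ico 0 ε) ∧
        (∀ x ∈ Set.Ico (0 : ℝ) ε, h x ≠ 0) ∧
        ∀ x ∈ Set.Ioo (0 : ℝ) ε, v x = c * x ^ (β 0) * h x) := by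
  constructor
  · intro v hv hode
    have hv' : ∀ x ∈ Set.Ioo (0 : ℝ) ε, DifferentiableAt ℝ v x ∧
        x * deriv v x = β x * v x := by
      intro x hx
      have hd : DifferentiableAt ℝ v x := by
        have h1 := (hv x (Set.Ioo_subset_Ico_self hx)).contDiffAt (Ico_mem_nhds_iff.2 hx)
        exact h1.differentiableAt (by simp)
      refine ⟨hd, ?_⟩
      have h2 := hode x (Set.Ioo_subset_Ico_self hx)
      rwa [derivWithin_of_mem_nhds (Ici_mem_nhds hx.1)] at h2
    obtain ⟨c, hh, hhC, hhne, hform⟩ := part2_aux hε hβ v hv'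
    have hβ0ne : β 0 ≠ 0 := ne_of_lt hβ0
    have h0S : (0 : ℝ) ∈ Set.Ico (0 : ℝ) ε := ⟨le_refl _, hε⟩
    have hv0 : v 0 = 0 := by
      have h1 := hode 0 h0S
      rw [zero_mul] at h1
      rcases mul_eq_zero.1 h1.symm with h | h
      · exact absurd h hβ0ne
      · exact h
    have hc : c = 0 := by
      by_contra hc
      have hne : (𝓝[Set.Ioo (0 : ℝ) ε] (0 : ℝ)).NeBot := by
        apply mem_closure_iff_nhdsWithin_neBot.1
        rw [closure_Ioo (ne_of_lt hε)]
        exact Set.left_mem_Icc.2 hε.le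
      haveI := hne
      set l := 𝓝[Set.Ioo (0 : ℝ) ε] (0 : ℝ) with hldef
      have hvt : Tendsto v l (𝓝 (v 0)) :=
        (hv.continuousOn 0 h0S).mono Set.Ioo_subset_Ico_self
      have hht : Tendsto hh l (𝓝 (hh 0)) :=
        (hhC.continuousOn 0 h0S).mono Set.Ioo_subset_Ico_self
      have hq : Tendsto (fun x => v x / (c * hh x)) l (𝓝 (v 0 / (c * hh 0))) :=
        hvt.div (tendsto_const_nhds.mul hht) (mul_ne_zero hc (hhne 0 h0S))
      have hqeq : ∀ᶠ x in l, x ^ (β 0) = v x / (c * hh x) := by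
        filter_upwards [self_mem_nhdsWithin] with x hx
        have h1 := hform x hx
        have h2 : hh x ≠ 0 := hhne x (Set.Ioo_subset_Ico_self hx)
        rw [h1]
        field_simp
      have hrt : Tendsto (fun x : ℝ => x ^ (β 0)) l atTop := by
        have hlog : Tendsto Real.log l atBot :=
          Real.tendsto_log_nhdsGT_zero.mono_left
            (nhdsWithin_mono _ Set.Ioo_subset_Ioi_self)
        have hmul : Tendsto (fun x => Real.log x * β 0) l atTop :=
          hlog.atBot_mul_const_of_neg hβ0
        have hexp : Tendsto (fun x => Real.exp (Real.log x * β 0)) l atTop :=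
          Real.tendsto_exp_atTop.comp hmul
        apply hexp.congr'
        filter_upwards [self_mem_nhdsWithin] with x hx
        rw [Real.rpow_def_of_pos hx.1]
      exact not_tendsto_atTop_of_tendsto_nhds
        (hq.congr' (hqeq.mono fun x hx => hx.symm)) hrt
    intro x hx
    rcases eq_or_lt_of_le hx.1 with h0 | h0
    · rw [← h0]; exact hv0
    · rw [hform x ⟨h0, hx.2⟩, hc]; ring
  · exact part2_aux hε hβ
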